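/- arXiv:2208.08574 — 2 statements merged into one kernel-verified Lean document; each statement's English description precedes it below -/
import Mathlib

section
/- Let $\sum_n x_n$ be a conditionally convergent series of real numbers (convergent but not absolutely convergent). Then for every real number $\alpha$ and every $\epsilon > 0$, there exists a sequence $(y_n)$ with $y_n \in \{0, x_n, -x_n\}$ for each $n$ such that $\sum_n y_n$ converges and $\left|\sum_n y_n - \alpha\right| < \epsilon$. -/
/-!
Since the series converges, its terms tend to `0`, while `∑ |xₙ|` diverges. Hence past some
index `M` the partial sums of `|xₙ|` increase to `+∞` in steps shorter than `ε`, and the first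
of them that exceeds `|α|` lies within `ε` of `|α|`. Taking `yₙ = ±|xₙ|` on that finite stretch
of indices, with the sign of `α`, and `yₙ = 0` elsewhere gives a finite sum within `ε` of `α`.
-/

open Filter Finset

theorem tendsto_zero_of_tendsto_sum_range {G : Type*} [AddCommGroup G] [TopologicalSpace G]
    [IsTopologicalAddGroup G] {x : ℕ → G} {l : G}
    (hl : Tendsto (fun n => ∑ i ∈ range n, x i) atTop (nhds l)) :
    Tendsto x atTop (nhds 0) := by
  have h := (hl.comp (tendsto_add_atTop_nat 1)).sub hl
  simpa only [Function.comp_def, sum_range_succ, add_sub_cancel_left, sub_self] using h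

theorem exists_mem_Ioo_of_tendsto_atTop_of_step_lt {u : ℕ → ℝ} {t ε : ℝ} (h0 : u 0 ≤ t)
    (hu : Tendsto u atTop atTop) (hstep : ∀ n, u (n + 1) < u n + ε) :
    ∃ n, u n ∈ Set.Ioo t (t + ε) := by
  classical
  -- the first term above `t` works
  have hex : ∃ n, t < u n := (hu.eventually_gt_atTop t).exists
  obtain ⟨k, hk⟩ : ∃ k, Nat.find hex = k + 1 :=
    Nat.exists_eq_add_one.mpr (Nat.pos_of_ne_zero fun h => (Nat.find_spec hex).not_ge (h ▸ h0))
  have hk_le : u k ≤ t := not_lt.mp (Nat.find_min hex (by omega))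
  refine ⟨k + 1, hk ▸ Nat.find_spec hex, ?_⟩
  linarith [hstep k]

theorem exists_finset_sum_mem_Ioo {a : ℕ → ℝ} (ha : ∀ n, 0 ≤ a n)
    (ha0 : Tendsto a atTop (nhds 0)) (hns : ¬ Summable a) {t ε : ℝ} (ht : 0 ≤ t) (hε : 0 < ε) :
    ∃ s : Finset ℕ, ∑ i ∈ s, a i ∈ Set.Ioo t (t + ε) := by
  obtain ⟨M, hM⟩ := eventually_atTop.mp (ha0.eventually (gt_mem_nhds hε))
  have htail : Tendsto (fun n => ∑ i ∈ range n, a (M + i)) atTop atTop := by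
    refine (not_summable_iff_tendsto_nat_atTop_of_nonneg fun n => ha _).mp ?_
    simpa only [add_comm M] using mt (summable_nat_add_iff M).mp hns
  obtain ⟨n, hn⟩ := exists_mem_Ioo_of_tendsto_atTop_of_step_lt (by simpa using ht) htail
    fun n => by rw [sum_range_succ]; linarith [hM (M + n) (by omega)]
  exact ⟨Ico M (M + n), by rwa [sum_Ico_eq_sum_range, Nat.add_sub_cancel_left]⟩

/-- A conditionally convergent real series can be sign-modified (choosing each term
from `{0, xₙ, -xₙ}`) so that its sum is within `ε` of any target `α`. -/
theorem stmt_0 (x : ℕ → ℝ)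
    (hconv : ∃ l : ℝ, Tendsto (fun n => ∑ i ∈ Finset.range n, x i) atTop (nhds l))
    (hnotabs : ¬ Summable (fun n => |x n|)) (α : ℝ) (ε : ℝ) (hε : 0 < ε) :
    ∃ y : ℕ → ℝ, (∀ n, y n = 0 ∨ y n = x n ∨ y n = -x n) ∧
      ∃ S : ℝ, Tendsto (fun n => ∑ i ∈ Finset.range n, y i) atTop (nhds S) ∧ |S - α| < ε := by
  obtain ⟨l, hl⟩ := hconv
  obtain ⟨s, hs⟩ := exists_finset_sum_mem_Ioo (fun n => abs_nonneg (x n))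
    (by simpa using (tendsto_zero_of_tendsto_sum_range hl).abs) hnotabs (abs_nonneg α) hε
  set σ : ℝ := if 0 ≤ α then 1 else -1
  have hσ : σ * |α| = α ∧ |σ| = 1 := by
    by_cases h : 0 ≤ α <;> simp [σ, h, abs_of_neg, not_le.mp]
  refine ⟨fun i => if i ∈ s then σ * |x i| else 0, fun n => ?_, σ * ∑ i ∈ s, |x i|, ?_, ?_⟩
  · by_cases hn : n ∈ s
    · by_cases h : 0 ≤ α <;> rcases abs_choice (x n) with hx | hx <;> simp [σ, hn, h, hx]
    · simp [hn]
  · have hsum : HasSum (fun i => if i ∈ s then σ * |x i| else 0)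
        (∑ i ∈ s, if i ∈ s then σ * |x i| else 0) :=
      hasSum_sum_of_ne_finset_zero fun i hi => if_neg hi
    simpa [Finset.mul_sum] using hsum.tendsto_sum_nat
  · rw [← hσ.1, ← mul_sub, abs_mul, hσ.2, one_mul, abs_sub_lt_iff]
    constructor <;> linarith [hs.1, hs.2]
end

section
/- Fix constants $c, c_0, C > 0$ with $6 C c c_0 \le e^{-1}$. For $N$ large, set $M = \lfloor \frac{\log N}{c \log\log N} \rfloor$ and let $k \le c_0 \frac{\log N}{(\log\log N)^2}$. Then $\sum_{m > M} \frac{(2k)^m}{m!} (C \log m)^m \ll e^{-M}$, where the implied constant is absolute. -/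
/-!
Put `L = log N`, `ℓ = log L` and `y = L / (c ℓ)`, so that `M = ⌊y⌋`. Since `log x / x` decreases
on `[e, ∞)`, every `m > M` satisfies `log m / m ≤ log y / y ≤ c ℓ² / L`, hence
`k log m ≤ c c₀ m`. With `m! ≥ (m / e)^m` the `m`-th term is at most
`(2 e C k log m / m)^m ≤ (2 e C c c₀)^m ≤ 3^{-m}`, and the tail `∑_{m > M} 3^{-m}` is
`3^{-M} / 2 ≤ e^{-M}`.
-/

open Real Filter
open scoped Nat

lemma pow_div_factorial_le_exp_one_mul_div_pow {a : ℝ} (ha : 0 ≤ a) {m : ℕ} (hm : 0 < m) :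
    a ^ m / m ! ≤ (exp 1 * a / m) ^ m := by
  have hm' : (0 : ℝ) < m := by exact_mod_cast hm
  calc a ^ m / m ! = (m : ℝ) ^ m / m ! * (a / m) ^ m := by rw [div_pow]; field_simp
    _ ≤ exp m * (a / m) ^ m := by gcongr; exact pow_div_factorial_le_exp _ hm'.le m
    _ = (exp 1 * a / m) ^ m := by rw [← exp_one_pow, mul_div_assoc, mul_pow]

lemma log_le_log_div_self_mul {x y : ℝ} (hy : exp 1 ≤ y) (hyx : y ≤ x) :
    log x ≤ log y / y * x := by
  have hx : 0 < x := (exp_pos 1).trans_le (hy.trans hyx)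
  rw [← div_le_iff₀ hx]
  exact log_div_self_antitoneOn hy (hy.trans hyx) hyx

lemma mul_log_le_of_div_le {c c₀ k L x : ℝ} (hc : 0 < c) (hk : 0 ≤ k)
    (hkle : k ≤ c₀ * L / log L ^ 2) (hcℓ : 1 ≤ c * log L) (hy : exp 1 ≤ L / (c * log L))
    (hx : L / (c * log L) ≤ x) : k * log x ≤ c * c₀ * x := by
  set ℓ := log L
  have hℓ : 0 < ℓ := pos_of_mul_pos_right (one_pos.trans_le hcℓ) hc.le
  have hL : 0 < L := by
    have := (exp_pos 1).trans_le hy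
    rwa [div_pos_iff_of_pos_right (by positivity)] at this
  have hlog_y : log (L / (c * ℓ)) ≤ ℓ :=
    log_le_log ((exp_pos 1).trans_le hy) (div_le_self hL.le hcℓ)
  have hx0 : 0 ≤ x := (exp_pos 1).le.trans (hy.trans hx)
  have hlog_x : log x ≤ c * ℓ ^ 2 / L * x := by
    calc log x ≤ log (L / (c * ℓ)) / (L / (c * ℓ)) * x := log_le_log_div_self_mul hy hx
      _ ≤ ℓ / (L / (c * ℓ)) * x := by gcongr
      _ = c * ℓ ^ 2 / L * x := by field_simp
  calc k * log x ≤ k * (c * ℓ ^ 2 / L * x) := by gcongr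
    _ ≤ c₀ * L / ℓ ^ 2 * (c * ℓ ^ 2 / L * x) := by gcongr
    _ = c * c₀ * x := by field_simp

lemma pow_div_factorial_mul_pow_le_inv_three_pow {c c₀ C k : ℝ} (hC : 0 ≤ C) (hk : 0 ≤ k)
    (hsmall : 6 * C * c * c₀ ≤ exp (-1)) {m : ℕ} (hm : 0 < m)
    (hklog : k * log m ≤ c * c₀ * m) :
    (2 * k) ^ m / m ! * (C * log m) ^ m ≤ (1 / 3) ^ m := by
  have hm' : (0 : ℝ) < m := by exact_mod_cast hm
  have hbase : exp 1 * (2 * k * (C * log m)) / m ≤ 1 / 3 := by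
    rw [div_le_iff₀ hm']
    have h₁ : exp 1 * (6 * C * c * c₀) ≤ 1 := by
      simpa [← exp_add] using mul_le_mul_of_nonneg_left hsmall (exp_pos 1).le
    nlinarith [mul_le_mul_of_nonneg_left hklog (by positivity : 0 ≤ exp 1 * C)]
  calc (2 * k) ^ m / m ! * (C * log m) ^ m = (2 * k * (C * log m)) ^ m / m ! := by ring
    _ ≤ (exp 1 * (2 * k * (C * log m)) / m) ^ m :=
      pow_div_factorial_le_exp_one_mul_div_pow (by positivity) hm
    _ ≤ (1 / 3) ^ m := by gcongr

lemma hasSum_geometric_subtype_lt {r : ℝ} (h₀ : 0 ≤ r) (h₁ : r < 1) (M : ℕ) :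
    HasSum (fun m : {m : ℕ // M < m} ↦ r ^ (m : ℕ)) (r ^ (M + 1) / (1 - r)) := by
  let e : {m : ℕ // M < m} ≃ ℕ :=
    (Equiv.subtypeEquivRight fun m ↦ by rw [Finset.mem_range, not_lt, Nat.succ_le_iff]).trans
      (notMemRangeEquiv (M + 1))
  have hshift : (fun m : {m : ℕ // M < m} ↦ r ^ (m : ℕ)) ∘ e.symm =
      fun n ↦ r ^ (M + 1) * r ^ n := by
    funext n
    simp [e, pow_add, mul_comm]
  rw [← e.symm.hasSum_iff, hshift, div_eq_mul_inv]
  exact (hasSum_geometric_of_lt_one h₀ h₁).mul_left _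

lemma tsum_subtype_lt_le_exp_neg {f : ℕ → ℝ} {M : ℕ} (hf₀ : ∀ m, 0 ≤ f m)
    (hf : ∀ m, M < m → f m ≤ (1 / 3) ^ m) :
    ∑' m : {m : ℕ // M < m}, f m ≤ exp (-M) := by
  have hgeom := hasSum_geometric_subtype_lt (r := 1 / 3) (by norm_num) (by norm_num) M
  have hle : ∀ m : {m : ℕ // M < m}, f m ≤ (1 / 3) ^ (m : ℕ) := fun m ↦ hf m m.2
  have hthird : (1 / 3 : ℝ) ≤ exp (-1) := by
    rw [exp_neg, one_div]
    exact inv_anti₀ (exp_pos 1) (exp_one_lt_d9.le.trans (by norm_num))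
  calc ∑' m : {m : ℕ // M < m}, f m
      ≤ (1 / 3) ^ (M + 1) / (1 - 1 / 3) :=
        ((Summable.of_nonneg_of_le (fun _ ↦ hf₀ _) hle hgeom.summable).tsum_le_tsum hle
          hgeom.summable).trans_eq hgeom.tsum_eq
    _ = (1 / 3) ^ M / 2 := by ring
    _ ≤ (1 / 3) ^ M := half_le_self (by positivity)
    _ ≤ exp (-1) ^ M := by gcongr
    _ = exp (-M) := by rw [← exp_nat_mul, mul_neg_one]

lemma eventually_one_le_mul_log_log_and_exp_one_le {c : ℝ} (hc : 0 < c) :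
    ∀ᶠ N : ℝ in atTop,
      1 ≤ c * log (log N) ∧ exp 1 ≤ log N / (c * log (log N)) := by
  refine tendsto_log_atTop.eventually (p := fun L ↦ 1 ≤ c * log L ∧ exp 1 ≤ L / (c * log L)) ?_
  filter_upwards [tendsto_log_atTop.eventually_ge_atTop (1 / c),
    isLittleO_log_id_atTop.bound (by positivity : 0 < 1 / (c * exp 1)),
    eventually_ge_atTop 0] with L hlog hlittle hL
  have hcℓ : 1 ≤ c * log L := by rwa [div_le_iff₀' hc] at hlog
  refine ⟨hcℓ, ?_⟩
  rw [le_div_iff₀ (by linarith)]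
  simp only [norm_eq_abs, id_eq, abs_of_nonneg hL] at hlittle
  have hlog_le := (le_abs_self _).trans hlittle
  calc exp 1 * (c * log L) ≤ exp 1 * (c * (1 / (c * exp 1) * L)) := by gcongr
    _ = L := by field_simp

theorem stmt_17_general (c c₀ C : ℝ) (hc : 0 < c) (hC : 0 < C)
    (hsmall : 6 * C * c * c₀ ≤ Real.exp (-1)) :
    ∃ K N₀ : ℝ, ∀ N : ℝ, N₀ ≤ N → ∀ k : ℝ, 0 ≤ k →
      k ≤ c₀ * Real.log N / (Real.log (Real.log N)) ^ 2 →
      (∑' m : {m : ℕ // ⌊Real.log N / (c * Real.log (Real.log N))⌋₊ < m},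
          (2 * k) ^ (m : ℕ) / (Nat.factorial m : ℝ) * (C * Real.log m) ^ (m : ℕ))
        ≤ K * Real.exp (-(⌊Real.log N / (c * Real.log (Real.log N))⌋₊ : ℝ)) := by
  obtain ⟨N₀, hN₀⟩ := (eventually_one_le_mul_log_log_and_exp_one_le hc).exists_forall_of_atTop
  refine ⟨1, N₀, fun N hN k hk hkle ↦ ?_⟩
  obtain ⟨hcℓ, hy⟩ := hN₀ N hN
  rw [one_mul]
  refine tsum_subtype_lt_le_exp_neg
    (f := fun m ↦ (2 * k) ^ m / (m ! : ℝ) * (C * log m) ^ m) (fun _ ↦ by positivity)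
    (fun m hm ↦ ?_)
  have hmy : log N / (c * log (log N)) ≤ m :=
    (Nat.lt_floor_add_one _).le.trans (by exact_mod_cast hm)
  exact pow_div_factorial_mul_pow_le_inv_three_pow hC.le hk hsmall (by omega)
    (mul_log_le_of_div_le hc hk hkle hcℓ hy hmy)

/-- Tail estimate `E₂`: with `M = ⌊log N/(c log log N)⌋` and `k ≤ c₀ log N/(log log N)²`,
one has `∑_{m > M} (2k)^m (C log m)^m / m! ≪ e^{-M}` provided `6 C c c₀ ≤ e^{-1}`. -/
theorem stmt_17 (c c₀ C : ℝ) (hc : 0 < c) (hc₀ : 0 < c₀) (hC : 0 < C)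
    (hsmall : 6 * C * c * c₀ ≤ Real.exp (-1)) :
    ∃ K N₀ : ℝ, ∀ N : ℝ, N₀ ≤ N → ∀ k : ℝ, 0 ≤ k →
      k ≤ c₀ * Real.log N / (Real.log (Real.log N)) ^ 2 →
      (∑' m : {m : ℕ // ⌊Real.log N / (c * Real.log (Real.log N))⌋₊ < m},
          (2 * k) ^ (m : ℕ) / (Nat.factorial m : ℝ) * (C * Real.log m) ^ (m : ℕ))
        ≤ K * Real.exp (-(⌊Real.log N / (c * Real.log (Real.log N))⌋₊ : ℝ)) :=
  stmt_17_general c c₀ C hc hC hsmall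
end
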